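/- arXiv:2304.04485 — 2 statements merged into one kernel-verified Lean document; each statement's English description precedes it below -/
import Mathlib

section
/- Let a, b be points in the open unit disk, nonzero, non-collinear with 0, with |a| ≠ |b|, and let c = (a − b + ab(conj(a)−conj(b)))/(|a|² − |b|²). Then |c| > 1, and the two intersection points of the unit circle S(0,1) with the circle S(c, √(|c|²−1)) are z = (1 ± i√(|c|²−1))/conj(c); that is, these two points z satisfy |z| = 1 and |z − c|² = |c|² − 1. -/
/-! The centre `c` comes with the identity
`|a - b + ab(ā - b̄)|² = (|a|² - |b|²)² + (1 - |a|²)(1 - |b|²)|a - b|²`,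
so `|c| > 1` as soon as `a ≠ b` lie in the open disk. A point `z = (1 + it)/c̄` with `t² = |c|² - 1`
has `|z|² = (1 + t²)/|c|² = 1` and `Re (z c̄) = 1`, hence `|z - c|² = |z|² + |c|² - 2 = |c|² - 1`. -/

open Complex ComplexConjugate

theorem Complex.normSq_sub_add_mul_mul_conj_sub (a b : ℂ) :
    normSq (a - b + a * b * (conj a - conj b)) =
      (normSq a - normSq b) ^ 2 + (1 - normSq a) * (1 - normSq b) * normSq (a - b) := by
  simp only [normSq_apply, add_re, add_im, sub_re, sub_im, mul_re, mul_im, conj_re, conj_im]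
  ring

theorem Complex.one_lt_norm_sub_add_mul_mul_conj_sub_div {a b : ℂ}
    (ha : ‖a‖ < 1) (hb : ‖b‖ < 1) (hne : ‖a‖ ≠ ‖b‖) :
    1 < ‖(a - b + a * b * (conj a - conj b)) / ((‖a‖ ^ 2 - ‖b‖ ^ 2 : ℝ) : ℂ)‖ := by
  have hD : ‖a‖ ^ 2 - ‖b‖ ^ 2 ≠ 0 :=
    sub_ne_zero.mpr ((pow_left_inj₀ (norm_nonneg a) (norm_nonneg b) two_ne_zero).not.mpr hne)
  have hab : 0 < normSq (a - b) := normSq_pos.mpr (sub_ne_zero.mpr (ne_of_apply_ne _ hne))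
  have h1a : 0 < 1 - normSq a := by rw [← Complex.sq_norm]; nlinarith [norm_nonneg a]
  have h1b : 0 < 1 - normSq b := by rw [← Complex.sq_norm]; nlinarith [norm_nonneg b]
  rw [← one_lt_sq_iff₀ (norm_nonneg _), Complex.sq_norm, normSq_div, normSq_ofReal,
    one_lt_div (mul_self_pos.mpr hD), normSq_sub_add_mul_mul_conj_sub, Complex.sq_norm,
    Complex.sq_norm]
  nlinarith [mul_pos (mul_pos h1a h1b) hab]

theorem Complex.norm_one_add_I_mul_div_conj {c : ℂ} (hc : c ≠ 0) {t : ℝ}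
    (ht : t ^ 2 = ‖c‖ ^ 2 - 1) :
    ‖(1 + I * t) / conj c‖ = 1 ∧ ‖(1 + I * t) / conj c - c‖ ^ 2 = ‖c‖ ^ 2 - 1 := by
  have hc' : normSq c ≠ 0 := normSq_eq_zero.not.mpr hc
  rw [Complex.sq_norm] at ht
  have hz : normSq ((1 + I * t) / conj c) = 1 := by
    rw [normSq_div, normSq_conj, div_eq_one_iff_eq hc']
    rw [mul_comm, ← ofReal_one, normSq_add_mul_I]
    linarith
  have hre : ((1 + I * t) / conj c * conj c).re = 1 := by
    rw [div_mul_cancel₀ _ ((map_ne_zero _).mpr hc)]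
    simp
  refine ⟨?_, ?_⟩
  · rw [norm_def, hz, Real.sqrt_one]
  · rw [Complex.sq_norm, Complex.sq_norm, normSq_sub, hz, hre]
    ring

theorem orthogonal_circle_intersection_general (a b : ℂ)
    (ha : ‖a‖ < 1) (hb : ‖b‖ < 1)
    (hne : ‖a‖ ≠ ‖b‖) :
    let c := (a - b + a * b * (starRingEnd ℂ a - starRingEnd ℂ b)) /
      ((‖a‖ ^ 2 - ‖b‖ ^ 2 : ℝ) : ℂ)
    1 < ‖c‖ ∧
      ∀ z : ℂ, (z = (1 + Complex.I * (Real.sqrt (‖c‖ ^ 2 - 1) : ℝ)) / starRingEnd ℂ c ∨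
          z = (1 - Complex.I * (Real.sqrt (‖c‖ ^ 2 - 1) : ℝ)) / starRingEnd ℂ c) →
        ‖z‖ = 1 ∧ ‖z - c‖ ^ 2 = ‖c‖ ^ 2 - 1 := by
  intro c
  have hc : 1 < ‖c‖ := one_lt_norm_sub_add_mul_mul_conj_sub_div ha hb hne
  have hc0 : c ≠ 0 := norm_pos_iff.mp (one_pos.trans hc)
  have hs : Real.sqrt (‖c‖ ^ 2 - 1) ^ 2 = ‖c‖ ^ 2 - 1 := Real.sq_sqrt (by nlinarith)
  refine ⟨hc, ?_⟩
  rintro z (rfl | rfl)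
  · exact norm_one_add_I_mul_div_conj hc0 hs
  · have hneg (s : ℝ) : 1 - I * s = 1 + I * (-s : ℝ) := by push_cast; ring
    rw [hneg]
    exact norm_one_add_I_mul_div_conj hc0 (by rwa [neg_sq])

theorem orthogonal_circle_intersection (a b : ℂ)
    (ha0 : a ≠ 0) (hb0 : b ≠ 0)
    (ha : ‖a‖ < 1) (hb : ‖b‖ < 1)
    (hne : ‖a‖ ≠ ‖b‖)
    (hnc : ¬ Collinear ℝ ({0, a, b} : Set ℂ)) :
    let c := (a - b + a * b * (starRingEnd ℂ a - starRingEnd ℂ b)) /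
      ((‖a‖ ^ 2 - ‖b‖ ^ 2 : ℝ) : ℂ)
    1 < ‖c‖ ∧
      ∀ z : ℂ, (z = (1 + Complex.I * (Real.sqrt (‖c‖ ^ 2 - 1) : ℝ)) / starRingEnd ℂ c ∨
          z = (1 - Complex.I * (Real.sqrt (‖c‖ ^ 2 - 1) : ℝ)) / starRingEnd ℂ c) →
        ‖z‖ = 1 ∧ ‖z - c‖ ^ 2 = ‖c‖ ^ 2 - 1 :=
  orthogonal_circle_intersection_general a b ha hb hne
end

section
/- Let a, b ∈ 𝔹² with |a| = |b|, a ≠ b. Then the visual angle metric satisfies v(a,b) = 2·arctan(|a−b|/(2 − |a+b|)), where v(a,b) = sup{∠(a,z,b) : |z| = 1}. -/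
/-!
After a rotation, `b = conj a` with `0 ≤ re a`. For `z` on the unit circle,
`cos ∠ a z (conj a) = re w / ‖w‖` with `w = (conj a - z) * conj (a - z)`, whose real part and
squared imaginary part are polynomials in `re a`, `im a` and `re z`. Comparing with `z = 1` comes
down to an inequality that is affine in `re z` on either side of `re z = re a`, hence is checked at
the endpoints. So the supremum is the angle at `z = 1`, which is `2 * arctan (|im a| / (1 - re a))`.
-/

open Complex EuclideanGeometry

/-- The visual angle metric of the unit disk. -/
noncomputable def vam (a b : ℂ) : ℝ :=
  sSup {θ : ℝ | ∃ z : ℂ, ‖z‖ = 1 ∧ θ = EuclideanGeometry.angle a z b}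

open scoped ComplexConjugate

lemma sq_sub_sq_mul_abs_sub_le {x y u : ℝ} (hx : 0 ≤ x) (hr : x ^ 2 + y ^ 2 ≤ 1) (hu : |u| ≤ 1) :
    ((1 - x) ^ 2 - y ^ 2) * |x - u| ≤ (1 - x) * (1 + x ^ 2 - y ^ 2 - 2 * u * x) := by
  obtain ⟨hu₁, hu₂⟩ := abs_le.mp hu
  have hx1 : x ≤ 1 := by nlinarith
  have hr' : 0 ≤ 1 - x ^ 2 - y ^ 2 := by linarith
  rcases le_total u x with h | h
  · rw [abs_of_nonneg (sub_nonneg.2 h)]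
    -- the gap is affine in `u`; this is its interpolation between `u = -1` and `u = x`
    have key : (x + 1) * ((1 - x) * (1 + x ^ 2 - y ^ 2 - 2 * u * x)
        - ((1 - x) ^ 2 - y ^ 2) * (x - u))
        = (1 + u) * (1 - x) * (1 - x ^ 2 - y ^ 2) + 2 * x * (x - u) * (1 - x ^ 2 + y ^ 2) := by
      ring
    have hpos : 0 ≤ (1 + u) * (1 - x) * (1 - x ^ 2 - y ^ 2)
        + 2 * x * (x - u) * (1 - x ^ 2 + y ^ 2) := by
      have : 0 ≤ 1 - x ^ 2 + y ^ 2 := by nlinarith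
      have := sub_nonneg.2 h
      have := sub_nonneg.2 hx1
      have : 0 ≤ 1 + u := by linarith
      positivity
    linarith [nonneg_of_mul_nonneg_right (key ▸ hpos) (by linarith : 0 < x + 1)]
  · rw [abs_of_nonpos (sub_nonpos.2 h)]
    have key : (1 - x) * (1 + x ^ 2 - y ^ 2 - 2 * u * x) - ((1 - x) ^ 2 - y ^ 2) * -(x - u)
        = (1 - u) * (1 - x ^ 2 - y ^ 2) := by
      ring
    linarith [mul_nonneg (sub_nonneg.2 hu₂) hr']

-- The angle of `X + 2 q e i` to the real axis is at most that of `(p + q i) ^ 2`.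
lemma sq_sub_sq_mul_sqrt_le {p q e X : ℝ} (hp : 0 < p) (h : (p ^ 2 - q ^ 2) * |e| ≤ p * X) :
    (p ^ 2 - q ^ 2) * √(X ^ 2 + (2 * q * e) ^ 2) ≤ X * (p ^ 2 + q ^ 2) := by
  set S := √(X ^ 2 + (2 * q * e) ^ 2)
  have hS0 : 0 ≤ S := Real.sqrt_nonneg _
  have hL : 0 ≤ p ^ 2 + q ^ 2 := by positivity
  have hsq : ((p ^ 2 - q ^ 2) * S) ^ 2 - (X * (p ^ 2 + q ^ 2)) ^ 2
      = 4 * q ^ 2 * (((p ^ 2 - q ^ 2) * |e|) ^ 2 - (p * X) ^ 2) := by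
    rw [mul_pow, Real.sq_sqrt (by positivity), mul_pow _ |e|, sq_abs]; ring
  rcases le_or_gt 0 X with hX | hX
  · rcases le_or_gt (p ^ 2 - q ^ 2) 0 with hK | hK
    · exact (mul_nonpos_of_nonpos_of_nonneg hK hS0).trans (mul_nonneg hX hL)
    · have he2 : ((p ^ 2 - q ^ 2) * |e|) ^ 2 ≤ (p * X) ^ 2 := pow_le_pow_left₀ (by positivity) h 2
      refine (pow_le_pow_iff_left₀ (by positivity) (by positivity) two_ne_zero).mp ?_
      nlinarith
  · have he2 : (p * X) ^ 2 ≤ ((p ^ 2 - q ^ 2) * |e|) ^ 2 := by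
      rw [← neg_sq, ← neg_sq ((p ^ 2 - q ^ 2) * |e|)]
      exact pow_le_pow_left₀ (by nlinarith) (by linarith) 2
    have hK : p ^ 2 - q ^ 2 ≤ 0 := by nlinarith [abs_nonneg e]
    suffices -(X * (p ^ 2 + q ^ 2)) ≤ -((p ^ 2 - q ^ 2) * S) by linarith
    refine (pow_le_pow_iff_left₀ (by nlinarith) (by nlinarith) two_ne_zero).mp ?_
    rw [neg_sq, neg_sq]
    nlinarith

lemma Real.cos_two_mul_arctan_div {p : ℝ} (hp : p ≠ 0) (q : ℝ) :
    Real.cos (2 * Real.arctan (q / p)) = (p ^ 2 - q ^ 2) / (p ^ 2 + q ^ 2) := by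
  rw [Real.cos_two_mul, Real.cos_sq_arctan, div_pow]
  field_simp
  ring

lemma cos_angle_eq_re_div_norm (a z b : ℂ) :
    Real.cos (∠ a z b) = ((b - z) * conj (a - z)).re / ‖(b - z) * conj (a - z)‖ := by
  rw [EuclideanGeometry.angle, InnerProductGeometry.cos_angle, Complex.inner, norm_mul,
    Complex.norm_conj, mul_comm ‖b - z‖]
  rfl

lemma angle_mul_left_eq {w : ℂ} (hw : w ≠ 0) (a z b : ℂ) :
    ∠ (w * a) (w * z) (w * b) = ∠ a z b := by
  simp only [EuclideanGeometry.angle, vsub_eq_sub, ← mul_sub, Complex.angle_mul_left hw]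

lemma exists_norm_eq_one_mul_eq_conj_mul {a b : ℂ} (h : ‖a‖ = ‖b‖) :
    ∃ w : ℂ, ‖w‖ = 1 ∧ w * b = conj (w * a) ∧ 0 ≤ (w * a).re := by
  obtain ⟨s, hs, hsb⟩ : ∃ s : ℂ, ‖s‖ = 1 ∧ s * b = conj (s * a) := by
    rcases eq_or_ne b 0 with rfl | hb
    · exact ⟨1, norm_one, by simp_all⟩
    obtain ⟨s, hs⟩ := IsAlgClosed.exists_pow_nat_eq (conj a / b) two_pos
    have hs1 : ‖s‖ = 1 := by
      rw [← pow_eq_one_iff_of_nonneg (norm_nonneg s) two_ne_zero, ← norm_pow, hs, norm_div,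
        norm_conj, h, div_self (norm_ne_zero_iff.mpr hb)]
    refine ⟨s, hs1, ?_⟩
    have hss : conj s * s = 1 := by rw [conj_mul', hs1]; norm_num
    rw [map_mul, ← div_mul_cancel₀ (conj a) hb, ← hs]
    linear_combination (-(s * b)) * hss
  rcases le_total 0 (s * a).re with hre | hre
  · exact ⟨s, hs, hsb, hre⟩
  · refine ⟨-s, by rw [norm_neg, hs], by rw [neg_mul, neg_mul, hsb, map_neg], ?_⟩
    rw [neg_mul, neg_re]
    exact neg_nonneg.mpr hre

section ConjugatePair

variable (a : ℂ) {z : ℂ}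

lemma re_conj_sub_mul_conj_sub (hz : ‖z‖ = 1) :
    ((conj a - z) * conj (a - z)).re = 1 + a.re ^ 2 - a.im ^ 2 - 2 * z.re * a.re := by
  have hz2 : z.re ^ 2 + z.im ^ 2 = 1 := by
    rw [← sq_norm_sub_sq_re z, hz]; ring
  simp only [mul_re, sub_re, sub_im, conj_re, conj_im]
  linear_combination hz2

lemma norm_conj_sub_mul_conj_sub (hz : ‖z‖ = 1) : ‖(conj a - z) * conj (a - z)‖ =
    √((1 + a.re ^ 2 - a.im ^ 2 - 2 * z.re * a.re) ^ 2 + (2 * a.im * (a.re - z.re)) ^ 2) := by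
  rw [norm_eq_sqrt_sq_add_sq, re_conj_sub_mul_conj_sub a hz]
  simp only [mul_im, sub_re, sub_im, conj_re, conj_im]
  ring_nf

lemma cos_angle_conj (hz : ‖z‖ = 1) :
    Real.cos (∠ a z (conj a)) = (1 + a.re ^ 2 - a.im ^ 2 - 2 * z.re * a.re) /
      √((1 + a.re ^ 2 - a.im ^ 2 - 2 * z.re * a.re) ^ 2 + (2 * a.im * (a.re - z.re)) ^ 2) := by
  rw [cos_angle_eq_re_div_norm, re_conj_sub_mul_conj_sub a hz, norm_conj_sub_mul_conj_sub a hz]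

end ConjugatePair

lemma cos_angle_one_conj {a : ℂ} (hre : a.re < 1) :
    Real.cos (∠ a 1 (conj a)) = ((1 - a.re) ^ 2 - a.im ^ 2) / ((1 - a.re) ^ 2 + a.im ^ 2) := by
  rw [cos_angle_conj a norm_one, one_re]
  congr 1
  · ring
  · rw [Real.sqrt_eq_iff_mul_self_eq_of_pos (by nlinarith [sq_nonneg a.im])]
    ring

lemma angle_one_conj {a : ℂ} (ha : a.re < 1) :
    ∠ a 1 (conj a) = 2 * Real.arctan (|a.im| / (1 - a.re)) := by
  have hre : 0 < 1 - a.re := sub_pos.mpr ha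
  refine Real.injOn_cos ⟨angle_nonneg _ _ _, angle_le_pi _ _ _⟩ ⟨?_, ?_⟩ ?_
  · have := Real.arctan_nonneg.mpr (div_nonneg (abs_nonneg a.im) hre.le)
    linarith
  · linarith [Real.arctan_lt_pi_div_two (|a.im| / (1 - a.re))]
  · rw [cos_angle_one_conj ha, Real.cos_two_mul_arctan_div hre.ne', sq_abs]

lemma angle_conj_le_angle_one_conj {a z : ℂ} (ha : ‖a‖ < 1) (hre : 0 ≤ a.re) (hz : ‖z‖ = 1) :
    ∠ a z (conj a) ≤ ∠ a 1 (conj a) := by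
  refine (Real.strictAntiOn_cos.le_iff_ge ⟨angle_nonneg _ _ _, angle_le_pi _ _ _⟩
    ⟨angle_nonneg _ _ _, angle_le_pi _ _ _⟩).mp ?_
  have hre1 : a.re < 1 := (re_le_norm a).trans_lt ha
  have hS : 0 < ‖(conj a - z) * conj (a - z)‖ := by
    refine norm_pos_iff.mpr (mul_ne_zero ?_ ((map_ne_zero _).mpr ?_)) <;>
      refine sub_ne_zero.mpr (ne_of_apply_ne norm ?_)
    · rw [norm_conj, hz]; exact ha.ne
    · rw [hz]; exact ha.ne
  rw [norm_conj_sub_mul_conj_sub a hz] at hS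
  rw [cos_angle_one_conj hre1, cos_angle_conj a hz, div_le_div_iff₀ (by nlinarith) hS]
  have hr : a.re ^ 2 + a.im ^ 2 ≤ 1 := by nlinarith [sq_norm_sub_sq_re a, norm_nonneg a]
  exact sq_sub_sq_mul_sqrt_le (sub_pos.mpr hre1)
    (sq_sub_sq_mul_abs_sub_le hre hr ((abs_re_le_norm z).trans hz.le))

lemma vam_mul_left {w : ℂ} (hw : ‖w‖ = 1) (a b : ℂ) : vam (w * a) (w * b) = vam a b := by
  have hw0 : w ≠ 0 := norm_ne_zero_iff.mp (by rw [hw]; exact one_ne_zero)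
  unfold vam
  congr 1
  ext θ
  constructor
  · rintro ⟨z, hz, rfl⟩
    refine ⟨w⁻¹ * z, by rw [norm_mul, norm_inv, hw, hz, inv_one, one_mul], ?_⟩
    rw [← angle_mul_left_eq hw0 a (w⁻¹ * z) b, mul_inv_cancel_left₀ hw0]
  · rintro ⟨z, hz, rfl⟩
    exact ⟨w * z, by rw [norm_mul, hw, hz, one_mul], (angle_mul_left_eq hw0 a z b).symm⟩

lemma vam_conj {a : ℂ} (ha : ‖a‖ < 1) (hre : 0 ≤ a.re) :
    vam a (conj a) = 2 * Real.arctan (|a.im| / (1 - a.re)) := by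
  have hmax : IsGreatest {θ : ℝ | ∃ z : ℂ, ‖z‖ = 1 ∧ θ = ∠ a z (conj a)} (∠ a 1 (conj a)) :=
    ⟨⟨1, norm_one, rfl⟩, fun _ ⟨_, hz, hθ⟩ ↦ hθ ▸ angle_conj_le_angle_one_conj ha hre hz⟩
  rw [vam, hmax.csSup_eq, angle_one_conj ((re_le_norm a).trans_lt ha)]

theorem vam_equal_moduli_general (a b : ℂ) (ha : ‖a‖ < 1) (heq : ‖a‖ = ‖b‖) :
    vam a b = 2 * Real.arctan (‖a - b‖ / (2 - ‖a + b‖)) := by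
  obtain ⟨w, hw, hwb, hre⟩ := exists_norm_eq_one_mul_eq_conj_mul heq
  have hwa : ‖w * a‖ < 1 := by rwa [norm_mul, hw, one_mul]
  have hnorm (c : ℂ) : ‖c‖ = ‖w * c‖ := by rw [norm_mul, hw, one_mul]
  have hsub : ‖a - b‖ = 2 * |(w * a).im| := by
    rw [hnorm, mul_sub, hwb, sub_conj, norm_mul, norm_I, mul_one, norm_real, Real.norm_eq_abs,
      abs_mul, abs_two]
  have hadd : ‖a + b‖ = 2 * (w * a).re := by
    rw [hnorm, mul_add, hwb, add_conj, norm_real, Real.norm_eq_abs, abs_of_nonneg (by positivity)]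
  rw [← vam_mul_left hw, hwb, vam_conj hwa hre, hsub, hadd, ← mul_one_sub,
    mul_div_mul_left _ _ two_ne_zero]

theorem vam_equal_moduli (a b : ℂ) (ha : ‖a‖ < 1) (hb : ‖b‖ < 1)
    (hab : a ≠ b) (heq : ‖a‖ = ‖b‖) :
    vam a b = 2 * Real.arctan (‖a - b‖ / (2 - ‖a + b‖)) :=
  vam_equal_moduli_general a b ha heq
end
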